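/- arXiv:math/0608781 — 3 statements merged into one kernel-verified Lean document; each statement's English description precedes it below -/
import Mathlib

section
/- Let H be a finite-dimensional Hopf algebra. The space End(H*) is a right Hopf module over H with left H*-action (α · f)(β) = f(β α₂)S⁻¹(α₁) and right H-action (f · h)(β) = f(h ⇀ β); that is, the compatibility α · (m · h) = (α₁ · m) · (α₂ ⇀ h) holds. -/
open TensorProduct

/-- Convolution product on `H* = Dual k H`. -/
noncomputable def conv {k H : Type*} [CommSemiring k] [Semiring H] [HopfAlgebra k H]
    (α β : Module.Dual k H) : Module.Dual k H :=
  (LinearMap.mul' k k) ∘ₗ (TensorProduct.map α β) ∘ₗ (Coalgebra.comul (R := k))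

/-- The action `⇀` of `H` on `H*`: `⟨h ⇀ β, x⟩ = ⟨β, x h⟩`. -/
noncomputable def hR {k H : Type*} [CommSemiring k] [Semiring H] [Algebra k H]
    (h : H) (β : Module.Dual k H) : Module.Dual k H :=
  β ∘ₗ LinearMap.mulRight k h

/-- The action `⇀` of `H*` on `H`: `α ⇀ h = ⟨α, h₂⟩ h₁`. -/
noncomputable def coevR {k H : Type*} [CommSemiring k] [Semiring H] [HopfAlgebra k H]
    (α : Module.Dual k H) : H →ₗ[k] H :=
  (TensorProduct.rid k H).toLinearMap ∘ₗ
    (TensorProduct.map LinearMap.id α) ∘ₗ (Coalgebra.comul (R := k))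

/-!
Both sides are images of elements of `H* ⊗ H*` under the bilinear map `(γ, δ) ↦ (m γ) * δ`.
Since `H` is finite dimensional, `H* ⊗ H* ≅ (H ⊗ H)*`, so it suffices that the two tensors
pair equally with every `x ⊗ y`. With `w = S⁻¹ y`, multiplicativity of `Δ` and the Sweedler
expansions of `α` and of the `αA i` reduce both pairings to `β(x₁ h₁) α(w x₂ h₂)`.
-/

open Module

section DualTensor

variable {R M N P : Type*} [CommRing R] [AddCommGroup M] [Module R M] [Free R M] [Module.Finite R M]
  [AddCommGroup N] [Module R N] [Free R N] [Module.Finite R N] [AddCommMonoid P] [Module R P]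

theorem sum_tmul_eq_of_sum_mul_eq {ι κ : Type*} {s : Finset ι} {t : Finset κ}
    {f : ι → Dual R M} {g : ι → Dual R N} {f' : κ → Dual R M} {g' : κ → Dual R N}
    (hfg : ∀ x y, ∑ i ∈ s, f i x * g i y = ∑ j ∈ t, f' j x * g' j y) :
    ∑ i ∈ s, f i ⊗ₜ[R] g i = ∑ j ∈ t, f' j ⊗ₜ[R] g' j := by
  apply (dualDistribEquiv R M N).injective
  ext x y
  simpa [dualDistrib_apply] using hfg x y

theorem sum_bilin_eq_of_sum_mul_eq {ι κ : Type*} {s : Finset ι} {t : Finset κ}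
    (B : Dual R M →ₗ[R] Dual R N →ₗ[R] P)
    {f : ι → Dual R M} {g : ι → Dual R N} {f' : κ → Dual R M} {g' : κ → Dual R N}
    (hfg : ∀ x y, ∑ i ∈ s, f i x * g i y = ∑ j ∈ t, f' j x * g' j y) :
    ∑ i ∈ s, B (f i) (g i) = ∑ j ∈ t, B (f' j) (g' j) := by
  simpa using congrArg (lift B) (sum_tmul_eq_of_sum_mul_eq hfg)

end DualTensor

section Convolution

variable {k H : Type*} [CommSemiring k] [Semiring H] [HopfAlgebra k H]

theorem conv_apply (γ δ : Dual k H) (x : H) :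
    conv γ δ x = LinearMap.mul' k k (map γ δ (Coalgebra.comul x)) :=
  rfl

theorem conv_add_left (γ γ' δ : Dual k H) : conv (γ + γ') δ = conv γ δ + conv γ' δ := by
  ext; simp [conv, map_add_left]

theorem conv_smul_left (c : k) (γ δ : Dual k H) : conv (c • γ) δ = c • conv γ δ := by
  ext; simp [conv, map_smul_left]

theorem conv_add_right (γ δ δ' : Dual k H) : conv γ (δ + δ') = conv γ δ + conv γ δ' := by
  ext; simp [conv, map_add_right]

theorem conv_smul_right (c : k) (γ δ : Dual k H) : conv γ (c • δ) = c • conv γ δ := by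
  ext; simp [conv, map_smul_right]

noncomputable def convBilin : Dual k H →ₗ[k] Dual k H →ₗ[k] Dual k H :=
  LinearMap.mk₂ k conv conv_add_left conv_smul_left conv_add_right conv_smul_right

theorem comp_mulLeft_eq_sum_smul {ι : Type*} {s : Finset ι} {δ : Dual k H}
    {δA δB : ι → Dual k H} (hδ : ∀ x y, δ (x * y) = ∑ i ∈ s, δA i x * δB i y) (w : H) :
    δ ∘ₗ LinearMap.mulLeft k w = ∑ i ∈ s, δA i w • δB i := by
  ext y; simp [hδ]

theorem conv_comp_mulLeft {ι : Type*} {s : Finset ι} {δ : Dual k H}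
    {δA δB : ι → Dual k H} (hδ : ∀ x y, δ (x * y) = ∑ i ∈ s, δA i x * δB i y) (γ : Dual k H)
    (w : H) : conv γ (δ ∘ₗ LinearMap.mulLeft k w) = ∑ i ∈ s, δA i w • conv γ (δB i) := by
  simpa [convBilin] using congrArg (convBilin γ) (comp_mulLeft_eq_sum_smul hδ w)

/-- `(γ * δ)(x h) = γ(x₁ h₁) δA(x₂) δB(h₂) = Σ γ(x₁ (δB ⇀ h)) δA(x₂)`. -/
theorem conv_apply_mul {ι : Type*} {s : Finset ι} {δ : Dual k H}
    {δA δB : ι → Dual k H} (hδ : ∀ x y, δ (x * y) = ∑ i ∈ s, δA i x * δB i y) (γ : Dual k H)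
    (x h : H) :
    conv γ δ (x * h) = ∑ i ∈ s, conv (γ ∘ₗ LinearMap.mulRight k (coevR (δB i) h)) (δA i) x := by
  simp only [conv_apply, Bialgebra.comul_mul, coevR, LinearMap.coe_comp, LinearEquiv.coe_coe,
    Function.comp_apply]
  induction Coalgebra.comul (R := k) x using TensorProduct.induction_on with
  | zero => simp
  | add u v hu hv => simp only [add_mul, map_add, hu, hv, Finset.sum_add_distrib]
  | tmul a b =>
    simp only [map_tmul, LinearMap.mul'_apply, LinearMap.comp_apply, LinearMap.mulRight_apply]
    induction Coalgebra.comul (R := k) h using TensorProduct.induction_on with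
    | zero => simp
    | add u v hu hv => simp only [mul_add, map_add, hu, hv, add_mul, Finset.sum_add_distrib]
    | tmul c d =>
      simp only [Algebra.TensorProduct.tmul_mul_tmul, map_tmul, LinearMap.mul'_apply,
        LinearMap.id_coe, id_eq, rid_tmul, mul_smul_comm, map_smul, smul_eq_mul, hδ,
        Finset.mul_sum]
      exact Finset.sum_congr rfl fun i _ => by ring

theorem sum_conv_apply_mul_mul {ι κ : Type*} {s : Finset ι} {t : Finset κ} {α : Dual k H}
    {αA αB : ι → Dual k H} {βA βB : ι → κ → Dual k H}
    (hΔ : ∀ x y, α (x * y) = ∑ i ∈ s, αA i x * αB i y)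
    (hΔ' : ∀ i, ∀ x y, αA i (x * y) = ∑ j ∈ t, βA i j x * βB i j y) (β : Dual k H) (x h w : H) :
    ∑ i ∈ s, conv β (αB i) (x * h) * αA i w
      = ∑ i ∈ s, ∑ j ∈ t,
          conv (β ∘ₗ LinearMap.mulRight k (coevR (αB i) h)) (βB i j) x * βA i j w := by
  have hαw : ∀ x y, (α ∘ₗ LinearMap.mulLeft k w) (x * y)
      = ∑ i ∈ s, (αA i ∘ₗ LinearMap.mulLeft k w) x * αB i y := by
    simp [← mul_assoc, hΔ]
  calc ∑ i ∈ s, conv β (αB i) (x * h) * αA i w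
      = conv β (α ∘ₗ LinearMap.mulLeft k w) (x * h) := by
        simp [conv_comp_mulLeft hΔ, mul_comm]
    _ = ∑ i ∈ s, conv (β ∘ₗ LinearMap.mulRight k (coevR (αB i) h))
          (αA i ∘ₗ LinearMap.mulLeft k w) x := conv_apply_mul hαw β x h
    _ = _ := by simp [conv_comp_mulLeft (hΔ' _), mul_comm]

end Convolution

theorem stmt4_general {k H : Type*} [Field k] [Ring H] [HopfAlgebra k H] [FiniteDimensional k H]
    (Sinv : H →ₗ[k] H)
    (m : Module.Dual k H →ₗ[k] Module.Dual k H) (h : H) (α : Module.Dual k H)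
    (ι : Type) [Fintype ι] (αA αB : ι → Module.Dual k H)
    (hΔ : ∀ x y : H, α (x * y) = ∑ i, αA i x * αB i y)
    (κ : Type) [Fintype κ] (βA βB : ι → κ → Module.Dual k H)
    (hΔ' : ∀ i, ∀ x y : H, αA i (x * y) = ∑ j, βA i j x * βB i j y)
    (β : Module.Dual k H) :
    ∑ i, conv (m ((conv β (αB i)) ∘ₗ LinearMap.mulRight k h)) ((αA i) ∘ₗ Sinv)
      = ∑ i, ∑ j,
          conv
            (m (conv (β ∘ₗ LinearMap.mulRight k (coevR (αB i) h)) (βB i j)))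
            ((βA i j) ∘ₗ Sinv) := by
  rw [← Fintype.sum_prod_type']
  refine sum_bilin_eq_of_sum_mul_eq (convBilin ∘ₗ m) fun x y => ?_
  rw [Fintype.sum_prod_type]
  simpa using sum_conv_apply_mul_mul hΔ hΔ' β x h (Sinv y)

/-- The Hopf-module compatibility `α · (m · h) = (α₁ · m) · (α₂ ⇀ h)` for the
actions `(α · f)(β) = f(β α₂) S⁻¹(α₁)` and `(f · h)(β) = f(h ⇀ β)` on `End(H*)`. -/
theorem stmt4 {k H : Type*} [Field k] [Ring H] [HopfAlgebra k H] [FiniteDimensional k H]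
    (Sinv : H →ₗ[k] H)
    (hS1 : ∀ x, Sinv ((HopfAlgebra.antipode (R := k) : H →ₗ[k] H) x) = x)
    (hS2 : ∀ x, (HopfAlgebra.antipode (R := k) : H →ₗ[k] H) (Sinv x) = x)
    (m : Module.Dual k H →ₗ[k] Module.Dual k H) (h : H) (α : Module.Dual k H)
    (ι : Type) [Fintype ι] (αA αB : ι → Module.Dual k H)
    (hΔ : ∀ x y : H, α (x * y) = ∑ i, αA i x * αB i y)
    (κ : Type) [Fintype κ] (βA βB : ι → κ → Module.Dual k H)
    (hΔ' : ∀ i, ∀ x y : H, αA i (x * y) = ∑ j, βA i j x * βB i j y)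
    (β : Module.Dual k H) :
    ∑ i, conv (m ((conv β (αB i)) ∘ₗ LinearMap.mulRight k h)) ((αA i) ∘ₗ Sinv)
      = ∑ i, ∑ j,
          conv
            (m (conv (β ∘ₗ LinearMap.mulRight k (coevR (αB i) h)) (βB i j)))
            ((βA i j) ∘ₗ Sinv) :=
  stmt4_general Sinv m h α ι αA αB hΔ κ βA βB hΔ' β
end

section
/- Let G be a finite group, F ≤ G a subgroup, H = kG the group Hopf algebra. Let V be a representation of F (more generally of a twisted group algebra k_σF) and give End(V) the F-action (f·T)(v) = f·T(f⁻¹·v). Then kG ⊗_{kF} End(V), with G acting on the first tensorand and product (x_i ⊗ T)(x_j ⊗ U) = δ_{ij}(x_i ⊗ T∘U) for coset representatives x_i, is a left kG-module algebra. -/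
/-!
A projective representation `u` of `F` on `V` gives a genuine action of `F` on `End(V)` by
`k`-algebra automorphisms `T ↦ u f ∘ T ∘ (u f)⁻¹`, because the cocycle scalars `c f f'` cancel
under conjugation. Writing `g x_i = x_{σ_g i} φ(g, i)`, uniqueness of the decompositions
`g = x_i f` makes `σ` an action of `G` on the cosets and `φ` a cocycle,
`φ(g g', i) = φ(g, σ_{g'} i) φ(g', i)`. Any such pair induces from an `F`-action on an algebra `A`
a `G`-action on `ι → A`, and each `g` acts coordinatewise by algebra automorphisms followed by a
permutation of coordinates, hence by an algebra automorphism.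
-/

section ProjectiveConjugation

variable {k V M : Type*} [CommSemiring k] [AddCommMonoid V] [Module k V] [Monoid M]

theorem LinearEquiv.conjAlgEquiv_eq_of_coe_eq_units_smul {e e' : V ≃ₗ[k] V} (c : kˣ)
    (h : ⇑e = (c : k) • ⇑e') : e.conjAlgEquiv k = e'.conjAlgEquiv k := by
  have happ (v : V) : e v = (c : k) • e' v := congrFun h v
  have hsymm (v : V) : e.symm v = ((c⁻¹ : kˣ) : k) • e'.symm v := by
    rw [LinearEquiv.symm_apply_eq, map_smul, happ, smul_smul, Units.inv_mul, one_smul,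
      LinearEquiv.apply_symm_apply]
  ext T v
  simp only [LinearEquiv.conjAlgEquiv_apply, LinearMap.comp_apply, LinearEquiv.coe_coe]
  rw [hsymm, LinearMap.map_smul, map_smul, happ, smul_smul, Units.inv_mul, one_smul]

def conjAlgEquivHomOfProjective (u : M → V ≃ₗ[k] V) (c : M → M → kˣ)
    (hu : ∀ f f' : M, (u f).toLinearMap ∘ₗ (u f').toLinearMap
      = (c f f' : k) • (u (f * f')).toLinearMap)
    (hu1 : u 1 = LinearEquiv.refl k V) :
    M →* (Module.End k V ≃ₐ[k] Module.End k V) where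
  toFun f := (u f).conjAlgEquiv k
  map_one' := by rw [hu1]; rfl
  map_mul' f f' := by
    have hcomp : ⇑((u f').trans (u f)) = (c f f' : k) • ⇑(u (f * f')) :=
      congrArg DFunLike.coe (hu f f')
    rw [← LinearEquiv.conjAlgEquiv_eq_of_coe_eq_units_smul _ hcomp]
    rfl

end ProjectiveConjugation

section CosetDecomposition

variable {G ι : Type*} [Group G] {F : Subgroup G} {x : ι → G}
  {σ : G → ι ≃ ι} {φ : G → ι → F}

theorem eq_and_eq_of_mul_eq_mul (hx : ∀ g : G, ∃! p : ι × F, g = x p.1 * (p.2 : G))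
    {i i' : ι} {f f' : F} (h : x i * (f : G) = x i' * (f' : G)) : i = i' ∧ f = f' := by
  obtain ⟨p, -, hp⟩ := hx (x i * (f : G))
  have hi : (i, f) = (i', f') := (hp (i, f) rfl).trans (hp (i', f') h).symm
  exact Prod.mk.inj hi

theorem cosetPerm_one (hx : ∀ g : G, ∃! p : ι × F, g = x p.1 * (p.2 : G))
    (hrep : ∀ (g : G) (i : ι), g * x i = x (σ g i) * (φ g i : G)) (i : ι) :
    σ 1 i = i ∧ φ 1 i = 1 := by
  have h : x (σ 1 i) * (φ 1 i : G) = x i * ((1 : F) : G) := by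
    rw [← hrep, one_mul, OneMemClass.coe_one, mul_one]
  exact eq_and_eq_of_mul_eq_mul hx h

theorem cosetPerm_mul (hx : ∀ g : G, ∃! p : ι × F, g = x p.1 * (p.2 : G))
    (hrep : ∀ (g : G) (i : ι), g * x i = x (σ g i) * (φ g i : G)) (g g' : G) (i : ι) :
    σ (g * g') i = σ g (σ g' i) ∧ φ (g * g') i = φ g (σ g' i) * φ g' i := by
  have h : x (σ (g * g') i) * (φ (g * g') i : G)
      = x (σ g (σ g' i)) * ((φ g (σ g' i) * φ g' i : F) : G) := by
    rw [← hrep, mul_assoc, hrep g', ← mul_assoc, hrep g, Subgroup.coe_mul, mul_assoc]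
  exact eq_and_eq_of_mul_eq_mul hx h

end CosetDecomposition

section InducedAction

variable {k G M ι A : Type*} [CommSemiring k] [Semiring A] [Algebra k A] [Monoid M]
  (ρ : M →* (A ≃ₐ[k] A)) (σ : G → ι ≃ ι) (φ : G → ι → M)

def inducedAct (g : G) : (ι → A) →ₐ[k] (ι → A) :=
  AlgHom.pi fun j =>
    (ρ (φ g ((σ g).symm j))).toAlgHom.comp (Pi.evalAlgHom k (fun _ => A) ((σ g).symm j))

theorem inducedAct_apply (g : G) (a : ι → A) (j : ι) :
    inducedAct ρ σ φ g a j = ρ (φ g ((σ g).symm j)) (a ((σ g).symm j)) :=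
  rfl

variable {ρ σ φ}

theorem inducedAct_one [Monoid G] (h1 : ∀ i, σ 1 i = i ∧ φ 1 i = 1) (a : ι → A) :
    inducedAct ρ σ φ 1 a = a := by
  funext j
  have hj : (σ 1).symm j = j := (σ 1).symm_apply_eq.mpr (h1 j).1.symm
  rw [inducedAct_apply, hj, (h1 j).2, map_one, AlgEquiv.one_apply]

theorem inducedAct_mul [Monoid G]
    (hmul : ∀ g g' i, σ (g * g') i = σ g (σ g' i) ∧ φ (g * g') i = φ g (σ g' i) * φ g' i)
    (g g' : G) (a : ι → A) :
    inducedAct ρ σ φ (g * g') a = inducedAct ρ σ φ g (inducedAct ρ σ φ g' a) := by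
  funext j
  set i := (σ (g * g')).symm j
  have hj : (σ g).symm j = σ g' i := by
    rw [Equiv.symm_apply_eq, ← (hmul g g' i).1, Equiv.apply_symm_apply]
  rw [inducedAct_apply, inducedAct_apply, inducedAct_apply, hj, Equiv.symm_apply_apply,
    (hmul g g' i).2, map_mul, AlgEquiv.mul_apply]

end InducedAction

/-- `kG ⊗_{kF} End(V)` is modelled as `ι → End(V)` with pointwise multiplication: the class of
`x_i ⊗ T` is the function supported at `i` with value `T`. -/
theorem stmt14_general {k : Type*} [Field k] {G : Type*} [Group G]
    (F : Subgroup G)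
    {V : Type*} [AddCommGroup V] [Module k V]
    -- a projective representation (`k_σF`-module structure) on `V`
    (c : F → F → kˣ) (u : F → (V ≃ₗ[k] V))
    (hu : ∀ f f' : F, (u f).toLinearMap ∘ₗ (u f').toLinearMap
        = (c f f' : k) • (u (f * f')).toLinearMap)
    (hu1 : u 1 = LinearEquiv.refl k V)
    -- coset representatives `x_i` and the induced permutation data
    {ι : Type*} (x : ι → G)
    (hx : ∀ g : G, ∃! p : ι × F, g = x p.1 * (p.2 : G))
    (σ : G → ι ≃ ι) (φ : G → ι → F)
    (hrep : ∀ (g : G) (i : ι), g * x i = x (σ g i) * (φ g i : G)) :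
    ∀ act : G → (ι → Module.End k V) → (ι → Module.End k V),
      (∀ g a j, act g a j
          = (u (φ g ((σ g).symm j))).toLinearMap ∘ₗ (a ((σ g).symm j)) ∘ₗ
              (u (φ g ((σ g).symm j))).symm.toLinearMap) →
      -- `act` is a `G`-action
      (∀ a, act 1 a = a) ∧
      (∀ g g' a, act (g * g') a = act g (act g' a)) ∧
      -- `G` acts by `k`-algebra automorphisms, i.e. the linear extension to `kG`
      -- makes `ι → End(V)` a `kG`-module algebra
      (∀ g a b, act g (a * b) = act g a * act g b) ∧
      (∀ g, act g 1 = 1) ∧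
      (∀ g a b, act g (a + b) = act g a + act g b) ∧
      (∀ g (r : k) a, act g (r • a) = r • act g a) := by
  intro act hact
  let ρ := conjAlgEquivHomOfProjective u c hu hu1
  obtain rfl : act = fun g => ⇑(inducedAct ρ σ φ g) := by
    funext g a j
    exact hact g a j
  exact ⟨inducedAct_one (cosetPerm_one hx hrep), inducedAct_mul (cosetPerm_mul hx hrep),
    fun g => map_mul _, fun g => map_one _, fun g => map_add _, fun g => map_smul _⟩

/-- `kG ⊗_{kF} End(V)` is modelled as the algebra `ι → End(V)` (with pointwise
multiplication), where `ι` indexes the cosets `x_i F` of a subgroup `F ≤ G`: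
the class of `x_i ⊗ T` corresponds to the function supported at `i` with value `T`.
The `G`-action `g·(x ⊗ T) = gx ⊗ T` becomes, via `g x_i = x_{σ_g(i)} φ(g,i)` and the
projective `F`-action `(f·T)(v) = f·T(f⁻¹·v)` given by conjugation by `u f`,
the action `act` below.  The statement: this makes `kG ⊗_{kF} End(V)` a left
`kG`-module algebra, i.e. `G` acts by `k`-algebra automorphisms. -/
theorem stmt14 {k : Type*} [Field k] {G : Type*} [Group G] [Fintype G]
    (F : Subgroup G)
    {V : Type*} [AddCommGroup V] [Module k V] [FiniteDimensional k V]
    -- a projective representation (`k_σF`-module structure) on `V`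
    (c : F → F → kˣ) (u : F → (V ≃ₗ[k] V))
    (hu : ∀ f f' : F, (u f).toLinearMap ∘ₗ (u f').toLinearMap
        = (c f f' : k) • (u (f * f')).toLinearMap)
    (hc : ∀ f : F, c 1 f = 1) (hc' : ∀ f : F, c f 1 = 1)
    (hu1 : u 1 = LinearEquiv.refl k V)
    -- coset representatives `x_i` and the induced permutation data
    {ι : Type*} [Fintype ι] (x : ι → G)
    (hx : ∀ g : G, ∃! p : ι × F, g = x p.1 * (p.2 : G))
    (σ : G → ι ≃ ι) (φ : G → ι → F)
    (hrep : ∀ (g : G) (i : ι), g * x i = x (σ g i) * (φ g i : G)) :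
    ∀ act : G → (ι → Module.End k V) → (ι → Module.End k V),
      (∀ g a j, act g a j
          = (u (φ g ((σ g).symm j))).toLinearMap ∘ₗ (a ((σ g).symm j)) ∘ₗ
              (u (φ g ((σ g).symm j))).symm.toLinearMap) →
      -- `act` is a `G`-action
      (∀ a, act 1 a = a) ∧
      (∀ g g' a, act (g * g') a = act g (act g' a)) ∧
      -- `G` acts by `k`-algebra automorphisms, i.e. the linear extension to `kG`
      -- makes `ι → End(V)` a `kG`-module algebra
      (∀ g a b, act g (a * b) = act g a * act g b) ∧
      (∀ g, act g 1 = 1) ∧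
      (∀ g a b, act g (a + b) = act g a + act g b) ∧
      (∀ g (r : k) a, act g (r • a) = r • act g a) :=
  stmt14_general F c u hu hu1 x hx σ φ hrep
end

section
/- Let H be a finite-dimensional Hopf algebra and K ⊆ H a left coideal subalgebra (Δ(K) ⊆ H ⊗ K), regarded as a left H-comodule algebra via Δ. Let K̄ = H/S⁻¹(K⁺)H where K⁺ = K ∩ ker ε. Then the Yan–Zhu stabilizer St_K(k) of the trivial one-dimensional K-module, identified with a subalgebra of H*, equals K̄* = {α ∈ H* : α(S⁻¹(x)h) = 0 for all x ∈ K⁺, h ∈ H}, i.e., α ∈ St_K(k) if and only if α vanishes on S⁻¹(K⁺)H. -/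
/- Writing `x = (x - ε x • 1) + ε x • 1` splits the stabilizer condition on `K` into the vanishing
condition on `K ∩ ker ε` plus the condition at `x = 1`, which holds automatically because
`S⁻¹ 1 = 1` and `ε 1 = 1`. -/

theorem stabilizer_condition_iff_forall_ker_counit
    {R A : Type*} [CommRing R] [Ring A] [Algebra R A]
    (φ : A →ₗ[R] A) (hφ : φ 1 = 1) (ε : A →ₗ[R] R) (hε : ε 1 = 1)
    (K : Submodule R A) (hK : (1 : A) ∈ K) (α : Module.Dual R A) :
    (∀ x ∈ K, ∀ t : A, ε x * α t = α (φ x * t)) ↔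
      (∀ x ∈ K, ε x = 0 → ∀ h : A, α (φ x * h) = 0) := by
  constructor
  · intro hst x hx hx0 h
    rw [← hst x hx h, hx0, zero_mul]
  · intro hv x hx t
    have hyK : x - ε x • 1 ∈ K := K.sub_mem hx (K.smul_mem _ hK)
    have hεy : ε (x - ε x • 1) = 0 := by
      rw [map_sub, map_smul, hε, smul_eq_mul, mul_one, sub_self]
    have := hv _ hyK hεy t
    rwa [map_sub, map_smul, hφ, sub_mul, smul_mul_assoc, one_mul, map_sub, map_smul,
      sub_eq_zero, smul_eq_mul, eq_comm] at this

theorem stmt19_general {k H : Type*} [Field k] [Ring H] [HopfAlgebra k H]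
    (Sinv : H →ₗ[k] H)
    (hS1 : ∀ x, Sinv ((HopfAlgebra.antipode (R := k) : H →ₗ[k] H) x) = x)
    (K : Subalgebra k H) :
    ∀ α : Module.Dual k H,
      -- `α` satisfies the stabilizer condition for the trivial `K`-module
      (∀ x ∈ K, ∀ t : H, Coalgebra.counit (R := k) x * α t = α (Sinv x * t))
        ↔ -- `α` vanishes on `S⁻¹(K⁺)H`
          (∀ x ∈ K, Coalgebra.counit (R := k) x = 0 → ∀ h : H, α (Sinv x * h) = 0) := by
  have hSinv_one : Sinv 1 = 1 := by simpa [HopfAlgebra.antipode_one] using hS1 1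
  exact stabilizer_condition_iff_forall_ker_counit Sinv hSinv_one _ Bialgebra.counit_one
    (Subalgebra.toSubmodule K) K.one_mem

/-- For a left coideal subalgebra `K ⊆ H`, the Yan–Zhu stabilizer of the trivial
`K`-module (identified with a subspace of `H*` via `End(k) ≅ k`) consists exactly of
the functionals vanishing on `S⁻¹(K⁺)H`. -/
theorem stmt19 {k H : Type*} [Field k] [Ring H] [HopfAlgebra k H] [FiniteDimensional k H]
    (Sinv : H →ₗ[k] H)
    (hS1 : ∀ x, Sinv ((HopfAlgebra.antipode (R := k) : H →ₗ[k] H) x) = x)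
    (hS2 : ∀ x, (HopfAlgebra.antipode (R := k) : H →ₗ[k] H) (Sinv x) = x)
    -- `K` is a left coideal subalgebra of `H`
    (K : Subalgebra k H)
    (hK : ∀ x ∈ K, Coalgebra.comul (R := k) x
      ∈ LinearMap.range (LinearMap.lTensor H (K.toSubmodule).subtype)) :
    ∀ α : Module.Dual k H,
      -- `α` satisfies the stabilizer condition for the trivial `K`-module
      (∀ x ∈ K, ∀ t : H, Coalgebra.counit (R := k) x * α t = α (Sinv x * t))
        ↔ -- `α` vanishes on `S⁻¹(K⁺)H`
          (∀ x ∈ K, Coalgebra.counit (R := k) x = 0 → ∀ h : H, α (Sinv x * h) = 0) :=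
  stmt19_general Sinv hS1 K
end
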